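/- arXiv:1805.03910 — 5 statements merged into one kernel-verified Lean document; each statement's English description precedes it below -/
import Mathlib

section
/- Let z* solve a(z*, h) = b(h) for all h ∈ H, where a is a continuous bilinear form on H and b a continuous linear form. Let r_1,…,r_m be the Riesz representers of a(·, z_1),…,a(·, z_m) for vectors z_1,…,z_m ∈ H, i.e. a(v, z_j) = ⟨r_j, v⟩ for all v ∈ H. Let P be the orthogonal projection onto a closed subspace V, and γ = sup_{h ∈ V⊥, ‖h‖=1} (Σ_j ⟨r_j, h⟩²)^{1/2}. Then Σ_{j=1}^m (b(z_j) − a(P(z*), z_j))² ≤ γ² dist(z*, V)². -/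
open scoped RealInnerProductSpace

/-!
The residuals are `b(z j) - a(P z*, z j) = a(e, z j) = ⟪r j, e⟫` for the
error `e = z* - P z*`, which lies in `Vᗮ` and has norm `dist(z*, V)`. The map
`h ↦ √(∑ j, ⟪r j, h⟫²)` is positively homogeneous, so on `Vᗮ` it is bounded by `γ ‖h‖`.
-/

theorem Submodule.infDist_eq_norm_sub_starProjection {H : Type*} [NormedAddCommGroup H]
    [InnerProductSpace ℝ H] (K : Submodule ℝ H) [K.HasOrthogonalProjection] (x : H) :
    Metric.infDist x (K : Set H) = ‖x - K.starProjection x‖ := by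
  rw [Metric.infDist_eq_iInf, K.starProjection_minimal]
  simp_rw [dist_eq_norm]
  rfl

section SumInnerSq

variable {H ι : Type*} [NormedAddCommGroup H] [InnerProductSpace ℝ H] [Fintype ι] (r : ι → H)

theorem sqrt_sum_inner_sq_smul (c : ℝ) (h : H) :
    √(∑ j, ⟪r j, c • h⟫ ^ 2) = |c| * √(∑ j, ⟪r j, h⟫ ^ 2) := by
  simp_rw [real_inner_smul_right, mul_pow, ← Finset.mul_sum]
  rw [Real.sqrt_mul (sq_nonneg c), Real.sqrt_sq_eq_abs]

theorem sqrt_sum_inner_sq_le_of_norm_eq_one {h : H} (hh : ‖h‖ = 1) :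
    √(∑ j, ⟪r j, h⟫ ^ 2) ≤ √(∑ j, ‖r j‖ ^ 2) := by
  refine Real.sqrt_le_sqrt (Finset.sum_le_sum fun j _ => ?_)
  calc ⟪r j, h⟫ ^ 2 = |⟪r j, h⟫| ^ 2 := (sq_abs _).symm
    _ ≤ (‖r j‖ * ‖h‖) ^ 2 := by gcongr; exact abs_real_inner_le_norm _ _
    _ = ‖r j‖ ^ 2 := by rw [hh, mul_one]

theorem sqrt_sum_inner_sq_le_sSup_mul_norm (K : Submodule ℝ H) {e : H} (he : e ∈ K) :
    √(∑ j, ⟪r j, e⟫ ^ 2) ≤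
      sSup {x : ℝ | ∃ h ∈ K, ‖h‖ = 1 ∧ x = √(∑ j, ⟪r j, h⟫ ^ 2)} * ‖e‖ := by
  set S := {x : ℝ | ∃ h ∈ K, ‖h‖ = 1 ∧ x = √(∑ j, ⟪r j, h⟫ ^ 2)}
  rcases eq_or_ne e 0 with rfl | he0
  · simp
  have hbdd : BddAbove S := by
    refine ⟨√(∑ j, ‖r j‖ ^ 2), ?_⟩
    rintro x ⟨h, -, hh, rfl⟩
    exact sqrt_sum_inner_sq_le_of_norm_eq_one r hh
  set u : H := ‖e‖⁻¹ • e
  have hu : u ∈ K := K.smul_mem _ he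
  have hu_norm : ‖u‖ = 1 := norm_smul_inv_norm he0
  have he_eq : e = ‖e‖ • u := by rw [smul_inv_smul₀ (norm_ne_zero_iff.mpr he0)]
  calc √(∑ j, ⟪r j, e⟫ ^ 2) = √(∑ j, ⟪r j, u⟫ ^ 2) * ‖e‖ := by
        rw [he_eq, sqrt_sum_inner_sq_smul, abs_norm, norm_smul, norm_norm, hu_norm, mul_one,
          mul_comm]
    _ ≤ sSup S * ‖e‖ := by gcongr; exact le_csSup hbdd ⟨u, hu, hu_norm, rfl⟩

theorem sum_inner_sq_le_sSup_sq_mul_norm_sq (K : Submodule ℝ H) {e : H} (he : e ∈ K) :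
    ∑ j, ⟪r j, e⟫ ^ 2 ≤
      sSup {x : ℝ | ∃ h ∈ K, ‖h‖ = 1 ∧ x = √(∑ j, ⟪r j, h⟫ ^ 2)} ^ 2 * ‖e‖ ^ 2 := by
  calc ∑ j, ⟪r j, e⟫ ^ 2 = √(∑ j, ⟪r j, e⟫ ^ 2) ^ 2 := (Real.sq_sqrt (by positivity)).symm
    _ ≤ _ := by rw [← mul_pow]; gcongr; exact sqrt_sum_inner_sq_le_sSup_mul_norm r K he

end SumInnerSq

theorem stmt_4_general {H : Type*} [NormedAddCommGroup H] [InnerProductSpace ℝ H]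
    (a : H →L[ℝ] H →L[ℝ] ℝ) (b : H →L[ℝ] ℝ) (zstar : H)
    (hz : ∀ h : H, a zstar h = b h)
    (m : ℕ) (z : Fin m → H) (r : Fin m → H)
    (hr : ∀ j, ∀ v : H, ⟪r j, v⟫ = a v (z j))
    (V : Submodule ℝ H) [CompleteSpace V]
    (γ : ℝ)
    (hγ : γ = sSup {x : ℝ | ∃ h ∈ Vᗮ, ‖h‖ = 1 ∧ x = Real.sqrt (∑ j, ⟪r j, h⟫ ^ 2)}) :
    (∑ j, (b (z j) - a ((V.orthogonalProjectionOnto zstar : H)) (z j)) ^ 2) ≤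
      γ ^ 2 * Metric.infDist zstar (V : Set H) ^ 2 := by
  have residual (j : Fin m) : b (z j) - a (V.orthogonalProjectionOnto zstar : H) (z j) =
      ⟪r j, zstar - V.starProjection zstar⟫ := by
    rw [hr, map_sub, FunLike.coe_sub, Pi.sub_apply, hz, V.starProjection_apply]
  simp_rw [residual, V.infDist_eq_norm_sub_starProjection, hγ]
  exact sum_inner_sq_le_sSup_sq_mul_norm_sq r Vᗮ (V.sub_starProjection_mem_orthogonal zstar)

/-- If `z*` solves `a(z*,h)=b(h)`, `r j` are Riesz representers of `a(·, z j)`,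
`P` the orthogonal projection onto a closed subspace `V`, and `γ` the sup of
`(∑ j ⟨r j, h⟩²)^{1/2}` over unit vectors `h ∈ Vᗮ`, then
`∑ j (b(z j) − a(P z*, z j))² ≤ γ² dist(z*, V)²`. -/
theorem stmt_4 {H : Type*} [NormedAddCommGroup H] [InnerProductSpace ℝ H] [CompleteSpace H]
    (a : H →L[ℝ] H →L[ℝ] ℝ) (b : H →L[ℝ] ℝ) (zstar : H)
    (hz : ∀ h : H, a zstar h = b h)
    (m : ℕ) (z : Fin m → H) (r : Fin m → H)
    (hr : ∀ j, ∀ v : H, ⟪r j, v⟫ = a v (z j))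
    (V : Submodule ℝ H) [CompleteSpace V]
    (γ : ℝ)
    (hγ : γ = sSup {x : ℝ | ∃ h ∈ Vᗮ, ‖h‖ = 1 ∧ x = Real.sqrt (∑ j, ⟪r j, h⟫ ^ 2)}) :
    (∑ j, (b (z j) - a ((V.orthogonalProjectionOnto zstar : H)) (z j)) ^ 2) ≤
      γ ^ 2 * Metric.infDist zstar (V : Set H) ^ 2 :=
  stmt_4_general a b zstar hz m z r hr V γ hγ
end

section
/- Let σ_1 ≥ σ_2 ≥ … ≥ σ_n > 0, δ_j ≥ 0, R ≥ 0, and suppose Σ_{j=1}^n σ_j² δ_j² ≥ R². Let ℓ be the largest index such that Σ_{j=ℓ}^n σ_j² δ_j² ≥ R², and let ρ ∈ [0,1] satisfy ρ σ_ℓ² δ_ℓ² + Σ_{j=ℓ+1}^n σ_j² δ_j² = R². Then sup { Σ_j β_j² : Σ_j σ_j² β_j² ≤ R², |β_j| ≤ δ_j for all j } = Σ_{j=ℓ+1}^n δ_j² + ρ δ_ℓ². -/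
/-- ellipsoid-box maximization. With `σ` positive decreasing, `δ ≥ 0`,
`R ≥ 0`, `∑ σ_j² δ_j² ≥ R²`, `ℓ` the largest index with `∑_{j≥ℓ} σ_j² δ_j² ≥ R²`, and
`ρ ∈ [0,1]` with `ρ σ_ℓ² δ_ℓ² + ∑_{j>ℓ} σ_j² δ_j² = R²`, the supremum of `∑ β_j²` over
the intersection equals `∑_{j>ℓ} δ_j² + ρ δ_ℓ²`. -/
theorem stmt_7 (n : ℕ) (σ δ : Fin n → ℝ) (R : ℝ)
    (hσpos : ∀ j, 0 < σ j) (hσmono : ∀ i j : Fin n, i ≤ j → σ j ≤ σ i)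
    (hδ : ∀ j, 0 ≤ δ j) (hR : 0 ≤ R)
    (htotal : R ^ 2 ≤ ∑ j, σ j ^ 2 * δ j ^ 2)
    (ℓ : Fin n)
    (hℓ : R ^ 2 ≤ ∑ j ∈ Finset.Ici ℓ, σ j ^ 2 * δ j ^ 2)
    (hℓmax : ∀ ℓ' : Fin n, ℓ < ℓ' → (∑ j ∈ Finset.Ici ℓ', σ j ^ 2 * δ j ^ 2) < R ^ 2)
    (ρ : ℝ) (hρ0 : 0 ≤ ρ) (hρ1 : ρ ≤ 1)
    (hρ : ρ * (σ ℓ ^ 2 * δ ℓ ^ 2) + ∑ j ∈ Finset.Ioi ℓ, σ j ^ 2 * δ j ^ 2 = R ^ 2) :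
    sSup {x : ℝ | ∃ β : Fin n → ℝ, (∑ j, σ j ^ 2 * β j ^ 2) ≤ R ^ 2 ∧
        (∀ j, |β j| ≤ δ j) ∧ x = ∑ j, β j ^ 2} =
      (∑ j ∈ Finset.Ioi ℓ, δ j ^ 2) + ρ * δ ℓ ^ 2 := by
  set T := (∑ j ∈ Finset.Ioi ℓ, δ j ^ 2) + ρ * δ ℓ ^ 2 with hT
  have hsplit : ∀ f : Fin n → ℝ,
      ∑ j, f j = ∑ j ∈ Finset.Iic ℓ, f j + ∑ j ∈ Finset.Ioi ℓ, f j := by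
    intro f
    rw [← Finset.sum_union (by simp [Finset.disjoint_left])]
    congr 1
    ext x
    simp [le_or_gt]
  have hσℓ : 0 < σ ℓ ^ 2 := pow_pos (hσpos ℓ) 2
  -- upper bound
  have hub : ∀ x ∈ {x : ℝ | ∃ β : Fin n → ℝ, (∑ j, σ j ^ 2 * β j ^ 2) ≤ R ^ 2 ∧
        (∀ j, |β j| ≤ δ j) ∧ x = ∑ j, β j ^ 2}, x ≤ T := by
    rintro x ⟨β, hβ1, hβ2, rfl⟩
    have hβsq : ∀ j, β j ^ 2 ≤ δ j ^ 2 := by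
      intro j
      have := pow_le_pow_left₀ (abs_nonneg (β j)) (hβ2 j) 2
      rwa [sq_abs] at this
    have key : σ ℓ ^ 2 * (∑ j, β j ^ 2) ≤ σ ℓ ^ 2 * T := by
      have h1 : ∑ j ∈ Finset.Iic ℓ, σ ℓ ^ 2 * β j ^ 2
          ≤ ∑ j ∈ Finset.Iic ℓ, σ j ^ 2 * β j ^ 2 := by
        apply Finset.sum_le_sum
        intro j hj
        have hjℓ : j ≤ ℓ := Finset.mem_Iic.1 hj
        have : σ ℓ ≤ σ j := hσmono j ℓ hjℓ
        have hsq : σ ℓ ^ 2 ≤ σ j ^ 2 := pow_le_pow_left₀ (le_of_lt (hσpos ℓ)) this 2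
        nlinarith [sq_nonneg (β j)]
      have h2 : ∑ j ∈ Finset.Ioi ℓ, σ ℓ ^ 2 * β j ^ 2
          ≤ ∑ j ∈ Finset.Ioi ℓ, (σ ℓ ^ 2 * δ j ^ 2 - σ j ^ 2 * δ j ^ 2 + σ j ^ 2 * β j ^ 2) := by
        apply Finset.sum_le_sum
        intro j hj
        have hjℓ : ℓ ≤ j := le_of_lt (Finset.mem_Ioi.1 hj)
        have : σ j ≤ σ ℓ := hσmono ℓ j hjℓ
        have hsq : σ j ^ 2 ≤ σ ℓ ^ 2 := pow_le_pow_left₀ (le_of_lt (hσpos j)) this 2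
        nlinarith [hβsq j]
      have e1 : σ ℓ ^ 2 * (∑ j, β j ^ 2)
          = ∑ j ∈ Finset.Iic ℓ, σ ℓ ^ 2 * β j ^ 2 + ∑ j ∈ Finset.Ioi ℓ, σ ℓ ^ 2 * β j ^ 2 := by
        rw [hsplit (fun j => β j ^ 2), mul_add, Finset.mul_sum, Finset.mul_sum]
      have e2 : ∑ j, σ j ^ 2 * β j ^ 2
          = ∑ j ∈ Finset.Iic ℓ, σ j ^ 2 * β j ^ 2 + ∑ j ∈ Finset.Ioi ℓ, σ j ^ 2 * β j ^ 2 :=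
        hsplit _
      have e3 : ∑ j ∈ Finset.Ioi ℓ, (σ ℓ ^ 2 * δ j ^ 2 - σ j ^ 2 * δ j ^ 2 + σ j ^ 2 * β j ^ 2)
          = σ ℓ ^ 2 * ∑ j ∈ Finset.Ioi ℓ, δ j ^ 2 - ∑ j ∈ Finset.Ioi ℓ, σ j ^ 2 * δ j ^ 2
            + ∑ j ∈ Finset.Ioi ℓ, σ j ^ 2 * β j ^ 2 := by
        rw [Finset.sum_add_distrib, Finset.sum_sub_distrib, Finset.mul_sum]
      have hTmul : σ ℓ ^ 2 * T = σ ℓ ^ 2 * ∑ j ∈ Finset.Ioi ℓ, δ j ^ 2 + ρ * (σ ℓ ^ 2 * δ ℓ ^ 2) := by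
        rw [hT]; ring
      rw [e1, hTmul]
      calc ∑ j ∈ Finset.Iic ℓ, σ ℓ ^ 2 * β j ^ 2 + ∑ j ∈ Finset.Ioi ℓ, σ ℓ ^ 2 * β j ^ 2
          ≤ ∑ j ∈ Finset.Iic ℓ, σ j ^ 2 * β j ^ 2
            + (σ ℓ ^ 2 * ∑ j ∈ Finset.Ioi ℓ, δ j ^ 2 - ∑ j ∈ Finset.Ioi ℓ, σ j ^ 2 * δ j ^ 2
              + ∑ j ∈ Finset.Ioi ℓ, σ j ^ 2 * β j ^ 2) := by
            rw [← e3]; exact add_le_add h1 h2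
        _ = (∑ j, σ j ^ 2 * β j ^ 2)
            + σ ℓ ^ 2 * ∑ j ∈ Finset.Ioi ℓ, δ j ^ 2 - ∑ j ∈ Finset.Ioi ℓ, σ j ^ 2 * δ j ^ 2 := by
            rw [e2]; ring
        _ ≤ R ^ 2 + σ ℓ ^ 2 * ∑ j ∈ Finset.Ioi ℓ, δ j ^ 2 - ∑ j ∈ Finset.Ioi ℓ, σ j ^ 2 * δ j ^ 2 := by
            linarith
        _ = σ ℓ ^ 2 * ∑ j ∈ Finset.Ioi ℓ, δ j ^ 2 + ρ * (σ ℓ ^ 2 * δ ℓ ^ 2) := by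
            rw [← hρ]; ring
    exact le_of_mul_le_mul_left key hσℓ
  -- membership
  have hmem : T ∈ {x : ℝ | ∃ β : Fin n → ℝ, (∑ j, σ j ^ 2 * β j ^ 2) ≤ R ^ 2 ∧
        (∀ j, |β j| ≤ δ j) ∧ x = ∑ j, β j ^ 2} := by
    refine ⟨fun j => if j < ℓ then 0 else if j = ℓ then Real.sqrt ρ * δ ℓ else δ j, ?_, ?_, ?_⟩
    · have e : ∀ f : Fin n → ℝ, ∑ j ∈ Finset.Iic ℓ, f j = ∑ j ∈ Finset.Iio ℓ, f j + f ℓ := by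
        intro f
        rw [← Finset.Iio_insert, Finset.sum_insert (by simp)]; ring
      rw [hsplit, e]
      have hIio : ∀ j ∈ Finset.Iio ℓ,
          σ j ^ 2 * (if j < ℓ then (0:ℝ) else if j = ℓ then Real.sqrt ρ * δ ℓ else δ j) ^ 2 = 0 := by
        intro j hj
        simp [Finset.mem_Iio.1 hj]
      rw [Finset.sum_eq_zero hIio]
      have hIoi : ∀ j ∈ Finset.Ioi ℓ,
          σ j ^ 2 * (if j < ℓ then (0:ℝ) else if j = ℓ then Real.sqrt ρ * δ ℓ else δ j) ^ 2
            = σ j ^ 2 * δ j ^ 2 := by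
        intro j hj
        have h := Finset.mem_Ioi.1 hj
        rw [if_neg (by exact not_lt.2 h.le), if_neg (by exact ne_of_gt h)]
      rw [Finset.sum_congr rfl hIoi]
      rw [show (fun j => if j < ℓ then (0:ℝ) else if j = ℓ then Real.sqrt ρ * δ ℓ else δ j) ℓ = Real.sqrt ρ * δ ℓ from by simp]
      rw [mul_pow, Real.sq_sqrt hρ0]
      nlinarith [hρ]
    · intro j
      by_cases h1 : j < ℓ
      · simp [h1, hδ j]
      · by_cases h2 : j = ℓ
        · subst h2
          have h3 : Real.sqrt ρ * δ j ≤ δ j := by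
            nlinarith [Real.sqrt_le_one.2 hρ1, Real.sqrt_nonneg ρ, hδ j]
          simpa [abs_of_nonneg (mul_nonneg (Real.sqrt_nonneg ρ) (hδ j))] using h3
        · simp [h1, h2, abs_of_nonneg (hδ j), le_refl]
    · have e : ∀ f : Fin n → ℝ, ∑ j ∈ Finset.Iic ℓ, f j = ∑ j ∈ Finset.Iio ℓ, f j + f ℓ := by
        intro f
        rw [← Finset.Iio_insert, Finset.sum_insert (by simp)]; ring
      rw [hsplit, e]
      have hIio : ∀ j ∈ Finset.Iio ℓ,
          (if j < ℓ then (0:ℝ) else if j = ℓ then Real.sqrt ρ * δ ℓ else δ j) ^ 2 = 0 := by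
        intro j hj
        simp [Finset.mem_Iio.1 hj]
      rw [Finset.sum_eq_zero hIio]
      have hIoi : ∀ j ∈ Finset.Ioi ℓ,
          (if j < ℓ then (0:ℝ) else if j = ℓ then Real.sqrt ρ * δ ℓ else δ j) ^ 2 = δ j ^ 2 := by
        intro j hj
        have h := Finset.mem_Ioi.1 hj
        rw [if_neg (by exact not_lt.2 h.le), if_neg (by exact ne_of_gt h)]
      rw [Finset.sum_congr rfl hIoi]
      rw [show (fun j => if j < ℓ then (0:ℝ) else if j = ℓ then Real.sqrt ρ * δ ℓ else δ j) ℓ = Real.sqrt ρ * δ ℓ from by simp]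
      rw [mul_pow, Real.sq_sqrt hρ0, hT]
      ring
  refine le_antisymm (csSup_le ⟨T, hmem⟩ hub) (le_csSup ⟨T, hub⟩ hmem)
end

section
/- In the constrained maximization of ‖β‖² over the intersection of the ellipsoid {Σ_j σ_j² β_j² ≤ R²} (σ_1 ≥ … ≥ σ_n > 0) and the box {|β_j| ≤ δ_j}, an optimal solution is given by β_j = δ_j for j > ℓ, β_ℓ = √ρ δ_ℓ, and β_j = 0 for j < ℓ, where ℓ and ρ ∈ [0,1] are determined by ρ σ_ℓ² δ_ℓ² + Σ_{j>ℓ} σ_j² δ_j² = R², assuming Σ_j σ_j² δ_j² ≥ R². That is, this β is feasible and achieves value Σ_{j>ℓ} δ_j² + ρ δ_ℓ². -/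
/-- In the ellipsoid-box maximization, the candidate
`β_j = δ_j` for `j > ℓ`, `β_ℓ = √ρ δ_ℓ`, `β_j = 0` for `j < ℓ`, is feasible and
achieves the value `∑_{j>ℓ} δ_j² + ρ δ_ℓ²`. -/
theorem stmt_8 (n : ℕ) (σ δ : Fin n → ℝ) (R : ℝ)
    (hσpos : ∀ j, 0 < σ j) (hσmono : ∀ i j : Fin n, i ≤ j → σ j ≤ σ i)
    (hδ : ∀ j, 0 ≤ δ j) (hR : 0 ≤ R)
    (htotal : R ^ 2 ≤ ∑ j, σ j ^ 2 * δ j ^ 2)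
    (ℓ : Fin n)
    (hℓ : R ^ 2 ≤ ∑ j ∈ Finset.Ici ℓ, σ j ^ 2 * δ j ^ 2)
    (hℓmax : ∀ ℓ' : Fin n, ℓ < ℓ' → (∑ j ∈ Finset.Ici ℓ', σ j ^ 2 * δ j ^ 2) < R ^ 2)
    (ρ : ℝ) (hρ0 : 0 ≤ ρ) (hρ1 : ρ ≤ 1)
    (hρ : ρ * (σ ℓ ^ 2 * δ ℓ ^ 2) + ∑ j ∈ Finset.Ioi ℓ, σ j ^ 2 * δ j ^ 2 = R ^ 2)
    (β : Fin n → ℝ)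
    (hβ : β = fun j => if ℓ < j then δ j else if j = ℓ then Real.sqrt ρ * δ ℓ else 0) :
    (∑ j, σ j ^ 2 * β j ^ 2) ≤ R ^ 2 ∧ (∀ j, |β j| ≤ δ j) ∧
      (∑ j, β j ^ 2) = (∑ j ∈ Finset.Ioi ℓ, δ j ^ 2) + ρ * δ ℓ ^ 2 := by
  have hβj : ∀ j, β j = if ℓ < j then δ j else if j = ℓ then Real.sqrt ρ * δ ℓ else 0 := by
    intro j; rw [hβ]
  have hsq : Real.sqrt ρ ^ 2 = ρ := Real.sq_sqrt hρ0
  have key : ∀ (g : Fin n → ℝ) (c : ℝ),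
      (∑ j, (if ℓ < j then g j else if j = ℓ then c else 0)) =
        c + ∑ j ∈ Finset.Ioi ℓ, g j := by
    intro g c
    rw [← Finset.sum_subset (Finset.subset_univ (insert ℓ (Finset.Ioi ℓ)))]
    · rw [Finset.sum_insert (by simp)]
      congr 1
      · simp
      · apply Finset.sum_congr rfl
        intro j hj
        simp only [Finset.mem_Ioi] at hj
        simp [hj]
    · intro j _ hj
      simp only [Finset.mem_insert, Finset.mem_Ioi] at hj
      push_neg at hj
      simp [hj.1, not_lt.mpr hj.2]
  refine ⟨?_, ?_, ?_⟩
  · have h1 : (∑ j, σ j ^ 2 * β j ^ 2) =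
        (Real.sqrt ρ * δ ℓ) ^ 2 * σ ℓ ^ 2 + ∑ j ∈ Finset.Ioi ℓ, σ j ^ 2 * δ j ^ 2 := by
      rw [← key (fun j => σ j ^ 2 * δ j ^ 2) ((Real.sqrt ρ * δ ℓ) ^ 2 * σ ℓ ^ 2)]
      apply Finset.sum_congr rfl
      intro j _
      rw [hβj j]
      by_cases h1 : ℓ < j
      · simp [h1]
      · by_cases h2 : j = ℓ
        · subst h2; simp [h1]; ring
        · simp [h1, h2]
    rw [h1, ← hρ]
    have h2 : (Real.sqrt ρ * δ ℓ) ^ 2 * σ ℓ ^ 2 = ρ * (σ ℓ ^ 2 * δ ℓ ^ 2) := by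
      rw [mul_pow, hsq]; ring
    rw [h2]
  · intro j
    rw [hβj j]
    by_cases h1 : ℓ < j
    · simp [h1, abs_of_nonneg (hδ j)]
    · by_cases h2 : j = ℓ
      · subst h2
        rw [if_neg h1, if_pos rfl,
          abs_of_nonneg (mul_nonneg (Real.sqrt_nonneg _) (hδ _))]
        calc Real.sqrt ρ * δ j ≤ 1 * δ j := by
              apply mul_le_mul_of_nonneg_right _ (hδ j)
              rw [show (1:ℝ) = Real.sqrt 1 by simp]
              exact Real.sqrt_le_sqrt hρ1
          _ = δ j := one_mul _
      · simp [h1, h2, hδ j]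
  · have h1 : (∑ j, β j ^ 2) =
        (Real.sqrt ρ * δ ℓ) ^ 2 + ∑ j ∈ Finset.Ioi ℓ, δ j ^ 2 := by
      rw [← key (fun j => δ j ^ 2) ((Real.sqrt ρ * δ ℓ) ^ 2)]
      apply Finset.sum_congr rfl
      intro j _
      rw [hβj j]
      by_cases h1 : ℓ < j
      · simp [h1]
      · by_cases h2 : j = ℓ
        · subst h2; simp [h1]
        · simp [h1, h2]
    rw [h1, mul_pow, hsq]
    ring
end

section
/- Let σ_1 ≥ … ≥ σ_n > 0, δ_j ≥ 0, R ≥ 0, ℓ the largest index with Σ_{j=ℓ}^n σ_j² δ_j² ≥ R² (assumed to exist), and ρ ∈ [0,1] with ρ σ_ℓ² δ_ℓ² + Σ_{j=ℓ+1}^n σ_j² δ_j² = R². Then for every β ∈ ℝ^n with Σ_j σ_j² β_j² ≤ R² and |β_j| ≤ δ_j for all j, one has Σ_j β_j² ≤ Σ_{j=ℓ+1}^n δ_j² + ρ δ_ℓ². -/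
/-- upper-bound direction of the ellipsoid-box maximization: every feasible
`β` satisfies `∑ β_j² ≤ ∑_{j>ℓ} δ_j² + ρ δ_ℓ²`. -/
theorem stmt_9 (n : ℕ) (σ δ : Fin n → ℝ) (R : ℝ)
    (hσpos : ∀ j, 0 < σ j) (hσmono : ∀ i j : Fin n, i ≤ j → σ j ≤ σ i)
    (hδ : ∀ j, 0 ≤ δ j) (hR : 0 ≤ R)
    (htotal : R ^ 2 ≤ ∑ j, σ j ^ 2 * δ j ^ 2)
    (ℓ : Fin n)
    (hℓ : R ^ 2 ≤ ∑ j ∈ Finset.Ici ℓ, σ j ^ 2 * δ j ^ 2)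
    (hℓmax : ∀ ℓ' : Fin n, ℓ < ℓ' → (∑ j ∈ Finset.Ici ℓ', σ j ^ 2 * δ j ^ 2) < R ^ 2)
    (ρ : ℝ) (hρ0 : 0 ≤ ρ) (hρ1 : ρ ≤ 1)
    (hρ : ρ * (σ ℓ ^ 2 * δ ℓ ^ 2) + ∑ j ∈ Finset.Ioi ℓ, σ j ^ 2 * δ j ^ 2 = R ^ 2) :
    ∀ β : Fin n → ℝ, (∑ j, σ j ^ 2 * β j ^ 2) ≤ R ^ 2 → (∀ j, |β j| ≤ δ j) →
      (∑ j, β j ^ 2) ≤ (∑ j ∈ Finset.Ioi ℓ, δ j ^ 2) + ρ * δ ℓ ^ 2 := by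
  intro β hβR hβabs
  set c : ℝ := σ ℓ ^ 2 with hc
  have hcpos : 0 < c := pow_pos (hσpos ℓ) 2
  have hβδ : ∀ j, β j ^ 2 ≤ δ j ^ 2 := by
    intro j
    have := pow_le_pow_left₀ (abs_nonneg (β j)) (hβabs j) 2
    simpa [sq_abs] using this
  -- split any sum over univ into Iic ℓ and Ioi ℓ
  have hsplit : ∀ f : Fin n → ℝ,
      (∑ j, f j) = (∑ j ∈ Finset.Iic ℓ, f j) + ∑ j ∈ Finset.Ioi ℓ, f j := by
    intro f
    rw [← Finset.sum_filter_add_sum_filter_not Finset.univ (· ≤ ℓ) f]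
    congr 1
    · apply Finset.sum_congr _ fun _ _ => rfl
      ext j; simp
    · apply Finset.sum_congr _ fun _ _ => rfl
      ext j; simp [not_le]
  -- main estimate multiplied by c
  have key : c * (∑ j, β j ^ 2) ≤ c * ((∑ j ∈ Finset.Ioi ℓ, δ j ^ 2) + ρ * δ ℓ ^ 2) := by
    have h1 : ∑ j ∈ Finset.Iic ℓ, c * β j ^ 2 ≤ ∑ j ∈ Finset.Iic ℓ, σ j ^ 2 * β j ^ 2 := by
      apply Finset.sum_le_sum
      intro j hj
      have hσle : σ ℓ ≤ σ j := hσmono j ℓ (Finset.mem_Iic.mp hj)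
      have : c ≤ σ j ^ 2 := pow_le_pow_left₀ (hσpos ℓ).le hσle 2
      nlinarith [sq_nonneg (β j)]
    have h2 : ∑ j ∈ Finset.Ioi ℓ, c * β j ^ 2 ≤
        ∑ j ∈ Finset.Ioi ℓ, (σ j ^ 2 * β j ^ 2 + (c - σ j ^ 2) * δ j ^ 2) := by
      apply Finset.sum_le_sum
      intro j hj
      have hσle : σ j ≤ σ ℓ := hσmono ℓ j (Finset.mem_Ioi.mp hj).le
      have hσ2 : σ j ^ 2 ≤ c := pow_le_pow_left₀ (hσpos j).le hσle 2
      nlinarith [hβδ j, sq_nonneg (β j)]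
    have h3 : (∑ j, σ j ^ 2 * β j ^ 2) =
        (∑ j ∈ Finset.Iic ℓ, σ j ^ 2 * β j ^ 2) + ∑ j ∈ Finset.Ioi ℓ, σ j ^ 2 * β j ^ 2 :=
      hsplit _
    have h4 : (∑ j, c * β j ^ 2) =
        (∑ j ∈ Finset.Iic ℓ, c * β j ^ 2) + ∑ j ∈ Finset.Ioi ℓ, c * β j ^ 2 := hsplit _
    have h5 : ∑ j ∈ Finset.Ioi ℓ, (σ j ^ 2 * β j ^ 2 + (c - σ j ^ 2) * δ j ^ 2) =
        (∑ j ∈ Finset.Ioi ℓ, σ j ^ 2 * β j ^ 2) +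
          ((c * ∑ j ∈ Finset.Ioi ℓ, δ j ^ 2) - ∑ j ∈ Finset.Ioi ℓ, σ j ^ 2 * δ j ^ 2) := by
      rw [Finset.sum_add_distrib, Finset.mul_sum, ← Finset.sum_sub_distrib]
      congr 1
      exact Finset.sum_congr rfl fun j _ => by ring
    calc c * (∑ j, β j ^ 2) = ∑ j, c * β j ^ 2 := by rw [Finset.mul_sum]
      _ = (∑ j ∈ Finset.Iic ℓ, c * β j ^ 2) + ∑ j ∈ Finset.Ioi ℓ, c * β j ^ 2 := h4
      _ ≤ (∑ j ∈ Finset.Iic ℓ, σ j ^ 2 * β j ^ 2) +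
            ∑ j ∈ Finset.Ioi ℓ, (σ j ^ 2 * β j ^ 2 + (c - σ j ^ 2) * δ j ^ 2) :=
          add_le_add h1 h2
      _ = (∑ j, σ j ^ 2 * β j ^ 2) +
            ((c * ∑ j ∈ Finset.Ioi ℓ, δ j ^ 2) - ∑ j ∈ Finset.Ioi ℓ, σ j ^ 2 * δ j ^ 2) := by
          rw [h3, h5]; ring
      _ ≤ R ^ 2 + ((c * ∑ j ∈ Finset.Ioi ℓ, δ j ^ 2) - ∑ j ∈ Finset.Ioi ℓ, σ j ^ 2 * δ j ^ 2) := by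
          linarith
      _ = c * ((∑ j ∈ Finset.Ioi ℓ, δ j ^ 2) + ρ * δ ℓ ^ 2) := by
          rw [← hρ]; ring
  exact le_of_mul_le_mul_left key hcpos
end

section
/- Let H be a real Hilbert space, a : H × H → ℝ continuous bilinear, b : H → ℝ continuous linear with a(z*, h) = b(h) for all h. Let V be a finite-dimensional subspace with orthonormal basis {w*_j}_{j=1}^n, z_1,…,z_m ∈ H with Riesz representers r*_j satisfying ⟨r*_i, w*_j⟩ = σ_j δ_{ij} (σ_j ≥ 0). Then for any v ∈ V, Σ_{j=1}^m (b(z̃_j) − a(v, z̃_j))² = Σ_{j=1}^n (⟨r*_j, z*⟩ − σ_j ⟨w*_j, v⟩)² + Σ_{j=n+1}^m ⟨r*_j, z*⟩², where z̃_j are the test vectors corresponding to r*_j (i.e. a(u, z̃_j) = ⟨r*_j, u⟩ for all u). -/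
open scoped RealInnerProductSpace

/-- expression of the multi-slice least-squares cost in the SVD bases:
for `v ∈ V = span{w*_j}`,
`∑_{j=1}^m (b(z̃_j) − a(v, z̃_j))² = ∑_{j=1}^n (⟨r*_j, z*⟩ − σ_j ⟨w*_j, v⟩)²
  + ∑_{j=n+1}^m ⟨r*_j, z*⟩²`. -/
theorem stmt_14 {H : Type*} [NormedAddCommGroup H] [InnerProductSpace ℝ H] [CompleteSpace H]
    (a : H →L[ℝ] H →L[ℝ] ℝ) (b : H →L[ℝ] ℝ) (zstar : H)
    (hz : ∀ h : H, a zstar h = b h)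
    (m n : ℕ) (hmn : n ≤ m)
    (wstar : Fin n → H) (hws : Orthonormal ℝ wstar)
    (σ : Fin n → ℝ) (hσ0 : ∀ j, 0 ≤ σ j)
    (rstar : Fin m → H)
    (horth : ∀ (i : Fin m) (j : Fin n),
      ⟪rstar i, wstar j⟫ = if (i : ℕ) = (j : ℕ) then σ j else 0)
    (zt : Fin m → H) (hzt : ∀ (j : Fin m) (u : H), a u (zt j) = ⟪rstar j, u⟫) :
    ∀ v ∈ Submodule.span ℝ (Set.range wstar),
      (∑ j, (b (zt j) - a v (zt j)) ^ 2) =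
        (∑ j : Fin n, (⟪rstar (Fin.castLE hmn j), zstar⟫ - σ j * ⟪wstar j, v⟫) ^ 2) +
          ∑ j ∈ Finset.univ.filter (fun j : Fin m => n ≤ (j : ℕ)),
            ⟪rstar j, zstar⟫ ^ 2 := by

  intro v hv
  have key : ∀ i : Fin m, ⟪rstar i, v⟫ =
      if h : (i : ℕ) < n then σ ⟨i, h⟩ * ⟪wstar ⟨i, h⟩, v⟫ else 0 := by
    induction hv using Submodule.span_induction with
    | mem x hx =>
      obtain ⟨j, rfl⟩ := hx
      intro i
      rw [horth]
      by_cases h : (i : ℕ) < n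
      · rw [dif_pos h, orthonormal_iff_ite.mp hws ⟨i, h⟩ j]
        by_cases hij : (i : ℕ) = (j : ℕ)
        · have : (⟨i, h⟩ : Fin n) = j := Fin.ext hij
          simp [hij, this]
        · have : (⟨i, h⟩ : Fin n) ≠ j := fun e => hij (congrArg Fin.val e)
          simp [hij, this]
      · have : (i : ℕ) ≠ (j : ℕ) := by omega
        rw [dif_neg h, if_neg this]
    | zero => intro i; simp
    | add x y hx hy ihx ihy =>
      intro i
      by_cases h : (i : ℕ) < n <;>
        simp [h, inner_add_right, ihx i, ihy i] <;> ring
    | smul c x hx ih =>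
      intro i
      by_cases h : (i : ℕ) < n <;>
        simp [h, real_inner_smul_right, ih i] <;> ring
  have hb : ∀ j : Fin m, b (zt j) = ⟪rstar j, zstar⟫ := fun j => by
    rw [← hz, hzt]
  simp only [hb, hzt, key]
  rw [← Finset.sum_filter_add_sum_filter_not Finset.univ (fun j : Fin m => (j : ℕ) < n)]
  congr 1
  · refine Finset.sum_bij' (fun j hj => (⟨(j : ℕ), by simpa using hj⟩ : Fin n))
      (fun j _ => Fin.castLE hmn j) ?_ ?_ ?_ ?_ ?_
    · intro j hj; simp
    · intro j _; simp
    · intro j hj; ext; simp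
    · intro j _; ext; simp
    · intro j hj
      have h : (j : ℕ) < n := by simpa using hj
      rw [dif_pos h]
      congr 1
  · refine Finset.sum_congr (by simp [not_lt]) fun j hj => ?_
    have h : ¬ (j : ℕ) < n := by
      simp only [Finset.mem_filter] at hj; omega
    rw [dif_neg h, sub_zero]
end
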